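/- arXiv:1405.6045 — 2 statements merged into one kernel-verified Lean document; each statement's English description precedes it below -/
import Mathlib

section
/- Let 0 ≤ α < n, let x ∈ ℝⁿ, r > 0, let f be locally integrable on ℝⁿ, and set f₂ = f·χ_{ℝⁿ∖B(x,2r)}. Then for every y ∈ B(x,r), M_α f₂(y) ≤ 2^{n−α} · sup_{t>2r} |B(x,t)|^{α/n − 1} ∫_{B(x,t)} |f(z)| dz. -/
open MeasureTheory Metric Set NNReal ENNReal Filter

noncomputable section

/-- A Young function: a convex, left-continuous `Φ : [0,∞) → [0,∞]` with `Φ(0) = 0`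
and `Φ(r) → ∞` as `r → ∞`. -/
structure YoungFunction where
  toFun : ℝ≥0 → ℝ≥0∞
  map_zero' : toFun 0 = 0
  convex' : ∀ (s t a b : ℝ≥0), a + b = 1 →
    toFun (a * s + b * t) ≤ (a : ℝ≥0∞) * toFun s + (b : ℝ≥0∞) * toFun t
  left_continuous' : ∀ s : ℝ≥0, 0 < s → toFun s = ⨆ (t : ℝ≥0) (_ : t < s), toFun t
  tendsto_top' : Tendsto toFun atTop (nhds (⊤ : ℝ≥0∞))

namespace YoungFunction

/-- The generalized inverse `Φ⁻¹(s) = inf {r ≥ 0 : Φ(r) > s}` (with `inf ∅ = ∞`). -/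
def inv (Φ : YoungFunction) (s : ℝ≥0∞) : ℝ≥0∞ :=
  sInf ((fun r : ℝ≥0 => (r : ℝ≥0∞)) '' {r : ℝ≥0 | s < Φ.toFun r})

/-- The canonical extension of `Φ` to `[0,∞]`. -/
def ext (Φ : YoungFunction) (s : ℝ≥0∞) : ℝ≥0∞ :=
  if s = ⊤ then ⊤ else Φ.toFun s.toNNReal

/-- `Φ` is of lower type `p`: `Φ(st) ≤ C t^p Φ(s)` for all `t ∈ [0,1]`, `s ≥ 0`. -/
def IsLowerType (Φ : YoungFunction) (p : ℝ) : Prop :=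
  ∃ C : ℝ, 0 < C ∧ ∀ (s t : ℝ≥0), t ≤ 1 →
    Φ.toFun (s * t) ≤ ENNReal.ofReal C * (t : ℝ≥0∞) ^ p * Φ.toFun s

/-- `Φ` is of upper type `p`: `Φ(st) ≤ C t^p Φ(s)` for all `t ≥ 1`, `s ≥ 0`. -/
def IsUpperType (Φ : YoungFunction) (p : ℝ) : Prop :=
  ∃ C : ℝ, 0 < C ∧ ∀ (s t : ℝ≥0), 1 ≤ t →
    Φ.toFun (s * t) ≤ ENNReal.ofReal C * (t : ℝ≥0∞) ^ p * Φ.toFun s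

end YoungFunction

variable {X : Type*} [MeasurableSpace X]

/-- The Luxemburg norm `‖g‖_{L_Φ(E)}` of an `[0,∞]`-valued function `g` on a set `E`. -/
def luxNormE (Φ : YoungFunction) (μ : Measure X) (E : Set X) (g : X → ℝ≥0∞) : ℝ≥0∞ :=
  sInf {lam : ℝ≥0∞ | 0 < lam ∧ ∫⁻ x in E, Φ.ext (g x / lam) ∂μ ≤ 1}

/-- The Luxemburg norm `‖f‖_{L_Φ(E)}` of a real-valued function `f` on a set `E`. -/
def luxNorm (Φ : YoungFunction) (μ : Measure X) (E : Set X) (f : X → ℝ) : ℝ≥0∞ :=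
  luxNormE Φ μ E fun x => (‖f x‖₊ : ℝ≥0∞)

/-- The weak Luxemburg norm `‖g‖_{WL_Φ(E)}`. -/
def wLuxNormE (Φ : YoungFunction) (μ : Measure X) (E : Set X) (g : X → ℝ≥0∞) : ℝ≥0∞ :=
  sInf {lam : ℝ≥0∞ | 0 < lam ∧
    ∀ t : ℝ≥0, 0 < t → Φ.toFun t * μ {x | x ∈ E ∧ (t : ℝ≥0∞) < g x / lam} ≤ 1}

/-- The weak Luxemburg norm of a real-valued function. -/
def wLuxNorm (Φ : YoungFunction) (μ : Measure X) (E : Set X) (f : X → ℝ) : ℝ≥0∞ :=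
  wLuxNormE Φ μ E fun x => (‖f x‖₊ : ℝ≥0∞)

/-- Euclidean space `ℝⁿ` with Lebesgue measure. -/
abbrev En (n : ℕ) := EuclideanSpace ℝ (Fin n)

/-- The fractional maximal operator
`M_α f(x) = sup_{t>0} |B(x,t)|^{α/n - 1} ∫_{B(x,t)} |f(y)| dy`. -/
def fracMaximal (n : ℕ) (α : ℝ) (f : En n → ℝ) (x : En n) : ℝ≥0∞ :=
  ⨆ (t : ℝ) (_ : 0 < t),
    volume (ball x t) ^ (α / (n : ℝ) - 1) * ∫⁻ y in ball x t, (‖f y‖₊ : ℝ≥0∞)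

/-- The commutator of the fractional maximal operator
`M_{b,α} f(x) = sup_{t>0} |B(x,t)|^{α/n - 1} ∫_{B(x,t)} |b(x)-b(y)||f(y)| dy`. -/
def commFracMaximal (n : ℕ) (α : ℝ) (b f : En n → ℝ) (x : En n) : ℝ≥0∞ :=
  ⨆ (t : ℝ) (_ : 0 < t),
    volume (ball x t) ^ (α / (n : ℝ) - 1) *
      ∫⁻ y in ball x t, (‖b x - b y‖₊ : ℝ≥0∞) * (‖f y‖₊ : ℝ≥0∞)

/-- The Hardy–Littlewood maximal operator. -/
def hlMaximal (n : ℕ) (f : En n → ℝ) (x : En n) : ℝ≥0∞ :=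
  ⨆ (t : ℝ) (_ : 0 < t),
    (volume (ball x t))⁻¹ * ∫⁻ y in ball x t, (‖f y‖₊ : ℝ≥0∞)

/-- The commutator of the Hardy–Littlewood maximal operator. -/
def commMaximal (n : ℕ) (b f : En n → ℝ) (x : En n) : ℝ≥0∞ :=
  ⨆ (t : ℝ) (_ : 0 < t),
    (volume (ball x t))⁻¹ * ∫⁻ y in ball x t, (‖b x - b y‖₊ : ℝ≥0∞) * (‖f y‖₊ : ℝ≥0∞)

/-- The generalized Orlicz–Morrey norm `‖g‖_{M_{Φ,φ}}` (for `[0,∞]`-valued functions). -/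
def morreyNormE (n : ℕ) (Φ : YoungFunction) (φ : En n → ℝ → ℝ) (g : En n → ℝ≥0∞) : ℝ≥0∞ :=
  ⨆ (x : En n) (r : ℝ) (_ : 0 < r),
    (ENNReal.ofReal (φ x r))⁻¹ * Φ.inv (ENNReal.ofReal r ^ (-(n : ℝ))) *
      luxNormE Φ volume (ball x r) g

/-- The generalized Orlicz–Morrey norm of a real-valued function. -/
def morreyNorm (n : ℕ) (Φ : YoungFunction) (φ : En n → ℝ → ℝ) (f : En n → ℝ) : ℝ≥0∞ :=
  morreyNormE n Φ φ fun x => (‖f x‖₊ : ℝ≥0∞)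

/-- The weak generalized Orlicz–Morrey norm `‖g‖_{WM_{Φ,φ}}`. -/
def wMorreyNormE (n : ℕ) (Φ : YoungFunction) (φ : En n → ℝ → ℝ) (g : En n → ℝ≥0∞) : ℝ≥0∞ :=
  ⨆ (x : En n) (r : ℝ) (_ : 0 < r),
    (ENNReal.ofReal (φ x r))⁻¹ * Φ.inv (ENNReal.ofReal r ^ (-(n : ℝ))) *
      wLuxNormE Φ volume (ball x r) g

/-- The Orlicz–Morrey norm `‖g‖_{M_{Φ,λ}}` with exponent `λ`. -/
def morreyLamNormE (n : ℕ) (Φ : YoungFunction) (lam : ℝ) (g : En n → ℝ≥0∞) : ℝ≥0∞ :=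
  ⨆ (x : En n) (r : ℝ) (_ : 0 < r),
    Φ.inv (ENNReal.ofReal r ^ (-lam)) * luxNormE Φ volume (ball x r) g

/-- The Orlicz–Morrey norm with exponent `λ` of a real-valued function. -/
def morreyLamNorm (n : ℕ) (Φ : YoungFunction) (lam : ℝ) (f : En n → ℝ) : ℝ≥0∞ :=
  morreyLamNormE n Φ lam fun x => (‖f x‖₊ : ℝ≥0∞)

/-- The average `f_{B(x,r)}` of `f` over the ball `B(x,r)`. -/
def ballAvg (n : ℕ) (b : En n → ℝ) (x : En n) (r : ℝ) : ℝ :=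
  ⨍ y in ball x r, b y

/-- The BMO seminorm `‖b‖_*`. -/
def bmoSeminorm (n : ℕ) (b : En n → ℝ) : ℝ≥0∞ :=
  ⨆ (x : En n) (r : ℝ) (_ : 0 < r),
    ENNReal.ofReal (⨍ y in ball x r, |b y - ballAvg n b x r|)

/-
For `y ∈ B(x,r)`, a ball `B(y,t)` with `t ≤ r` lies inside `B(x,2r)`, where `f₂` vanishes, while a
ball `B(y,t)` with `t > r` lies inside `B(x,2t)`, whose measure is `2ⁿ |B(y,t)|`. Raising this
doubling identity to the power `α/n - 1` produces the factor `2^{n-α}`.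
-/

open Module

section AddHaarBall

variable {E : Type*} [NormedAddCommGroup E] [NormedSpace ℝ E] [MeasurableSpace E] [BorelSpace E]
  [FiniteDimensional ℝ E] (μ : Measure E) [μ.IsAddHaarMeasure]

theorem addHaar_ball_two_mul (x y : E) (t : ℝ) :
    μ (ball x (2 * t)) = 2 ^ finrank ℝ E * μ (ball y t) := by
  rw [Measure.addHaar_ball_mul_of_pos μ x two_pos, Measure.addHaar_ball_center μ y,
    ENNReal.ofReal_pow zero_le_two, ENNReal.ofReal_ofNat]

theorem addHaar_ball_rpow_eq_two_rpow_mul (hE : 0 < finrank ℝ E) (x y : E) {t : ℝ} (ht : 0 < t)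
    (α : ℝ) :
    μ (ball y t) ^ (α / finrank ℝ E - 1) =
      2 ^ ((finrank ℝ E : ℝ) - α) * μ (ball x (2 * t)) ^ (α / finrank ℝ E - 1) := by
  have hball : μ (ball y t) ≠ 0 := (measure_ball_pos μ y ht).ne'
  have hexp : (finrank ℝ E : ℝ) - α + finrank ℝ E * (α / finrank ℝ E - 1) = 0 := by
    field_simp
    ring
  rw [addHaar_ball_two_mul μ x y t, ENNReal.mul_rpow_of_ne_zero (by simp) hball, ← mul_assoc,
    ← ENNReal.rpow_natCast, ← ENNReal.rpow_mul,
    ← ENNReal.rpow_add _ _ two_ne_zero ENNReal.ofNat_ne_top, hexp, ENNReal.rpow_zero, one_mul]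

end AddHaarBall

theorem setLIntegral_nnnorm_indicator_compl_eq_zero {α F : Type*} [MeasurableSpace α]
    [NormedAddCommGroup F] {μ : Measure α} {s t : Set α} (hs : MeasurableSet s) (hst : s ⊆ t)
    (f : α → F) : ∫⁻ z in s, (‖tᶜ.indicator f z‖₊ : ℝ≥0∞) ∂μ = 0 :=
  setLIntegral_eq_zero hs fun z hz => by simp [indicator_of_notMem (notMem_compl_iff.2 (hst hz))]

theorem volume_ball_rpow_mul_lintegral_indicator_compl_le {n : ℕ} (hn : 0 < n) (α : ℝ)
    {x y : En n} {r t : ℝ} (hy : y ∈ ball x r) (hrt : r < t) (f : En n → ℝ) :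
    volume (ball y t) ^ (α / (n : ℝ) - 1) *
        ∫⁻ z in ball y t, (‖((ball x (2 * r))ᶜ).indicator f z‖₊ : ℝ≥0∞) ≤
      (2 : ℝ≥0∞) ^ ((n : ℝ) - α) * (volume (ball x (2 * t)) ^ (α / (n : ℝ) - 1) *
        ∫⁻ z in ball x (2 * t), (‖f z‖₊ : ℝ≥0∞)) := by
  have hvol := addHaar_ball_rpow_eq_two_rpow_mul volume (by simpa using hn) x y
    ((dist_nonneg.trans_lt hy).trans hrt) α
  rw [finrank_euclideanSpace_fin] at hvol
  have hsub : ball y t ⊆ ball x (2 * t) := ball_subset_ball' (by rw [mem_ball] at hy; linarith)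
  rw [hvol, mul_assoc]
  gcongr
  exact norm_indicator_le_norm_self f z

theorem fracMaximal_indicator_compl_le_general
    (n : ℕ) (α : ℝ) (hα0 : 0 ≤ α) (hαn : α < n)
    (x : En n) (r : ℝ)
    (f : En n → ℝ)
    (y : En n) (hy : y ∈ ball x r) :
    fracMaximal n α (((ball x (2 * r))ᶜ).indicator f) y ≤
      (2 : ℝ≥0∞) ^ ((n : ℝ) - α) *
        ⨆ (t : ℝ) (_ : 2 * r < t),
          volume (ball x t) ^ (α / (n : ℝ) - 1) *
            ∫⁻ z in ball x t, (‖f z‖₊ : ℝ≥0∞) := by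
  have hn : 0 < n := by exact_mod_cast hα0.trans_lt hαn
  refine iSup₂_le fun t _ => ?_
  rcases le_or_gt t r with htr | hrt
  · have hsub : ball y t ⊆ ball x (2 * r) :=
      ball_subset_ball' (by rw [mem_ball] at hy; linarith)
    simp [setLIntegral_nnnorm_indicator_compl_eq_zero measurableSet_ball hsub]
  · refine (volume_ball_rpow_mul_lintegral_indicator_compl_le hn α hy hrt f).trans ?_
    gcongr
    exact le_iSup₂_of_le (2 * t) (by linarith) le_rfl

/-- Pointwise estimate for the fractional maximal operator applied to
`f₂ = f·χ_{ℝⁿ∖B(x,2r)}` on the ball `B(x,r)`. -/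
theorem fracMaximal_indicator_compl_le
    (n : ℕ) (α : ℝ) (hα0 : 0 ≤ α) (hαn : α < n)
    (x : En n) (r : ℝ) (hr : 0 < r)
    (f : En n → ℝ) (hf : LocallyIntegrable f volume)
    (y : En n) (hy : y ∈ ball x r) :
    fracMaximal n α (((ball x (2 * r))ᶜ).indicator f) y ≤
      (2 : ℝ≥0∞) ^ ((n : ℝ) - α) *
        ⨆ (t : ℝ) (_ : 2 * r < t),
          volume (ball x t) ^ (α / (n : ℝ) - 1) *
            ∫⁻ z in ball x t, (‖f z‖₊ : ℝ≥0∞) :=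
  fracMaximal_indicator_compl_le_general n α hα0 hαn x r f y hy

end
end

section
/- Let 0 ≤ α < n and let Φ, Ψ be Young functions such that the fractional maximal operator M_α is bounded from L_Φ(ℝⁿ) to L_Ψ(ℝⁿ), i.e. there is A > 0 with ‖M_α g‖_{L_Ψ(ℝⁿ)} ≤ A‖g‖_{L_Φ(ℝⁿ)} for all g (by Cianchi's theorem this is equivalent to the condition ∫₀¹ Ψ(t)/t^{1+n/(n−α)} dt < ∞ together with Φ dominating Ψ_{n/α} globally). Then there exists C > 0, independent of x, r and f, such that for every ball B = B(x,r) and every locally integrable f: ‖M_α f‖_{L_Ψ(B(x,r))} ≤ C ( ‖f‖_{L_Φ(B(x,2r))} + Ψ⁻¹(r⁻ⁿ)⁻¹ · sup_{t>2r} t^{α−n} ∫_{B(x,t)} |f(z)| dz ). -/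
open MeasureTheory Metric Set NNReal ENNReal Filter

noncomputable section

variable {X : Type*} [MeasurableSpace X]

/-!
Split `f = f₁ + f₂` with `f₁ = f · 1_{B(x,2r)}`. The near part is controlled by the global bound,
since shrinking the domain of a Luxemburg norm only decreases it. For the far part, a ball
`B(y,t)` with `y ∈ B(x,r)` misses `B(x,2r)ᶜ` when `t ≤ r` and lies in `B(x,2t)` when `t > r`, so
`M_α f₂` is bounded on `B(x,r)` by a constant times `sup_{t>2r} t^{α-n} ∫_{B(x,t)} |f|`.
A constant `c` has Luxemburg norm `≲ c / Ψ⁻¹(|B|⁻¹)` on `B`, and `|B(x,r)| = |B(0,1)| rⁿ`;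
the triangle inequality for the Luxemburg norm combines the two parts.
-/

namespace YoungFunction

variable (Φ : YoungFunction)

lemma toFun_mul_le_of_le_one {a : ℝ≥0} (ha : a ≤ 1) (u : ℝ≥0) :
    Φ.toFun (a * u) ≤ a * Φ.toFun u := by
  simpa [Φ.map_zero'] using Φ.convex' u 0 a (1 - a) (add_tsub_cancel_of_le ha)

lemma toFun_mono : Monotone Φ.toFun := by
  intro s t hst
  rcases eq_or_ne t 0 with rfl | ht
  · simp [nonpos_iff_eq_zero.1 hst]
  calc Φ.toFun s = Φ.toFun (s / t * t) := by rw [div_mul_cancel₀ s ht]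
    _ ≤ (s / t : ℝ≥0) * Φ.toFun t := Φ.toFun_mul_le_of_le_one (div_le_one_of_le₀ hst zero_le) t
    _ ≤ Φ.toFun t := mul_le_of_le_one_left zero_le (by exact_mod_cast div_le_one_of_le₀ hst zero_le)

lemma mul_toFun_le_of_one_le {a : ℝ≥0} (ha : 1 ≤ a) (u : ℝ≥0) :
    a * Φ.toFun u ≤ Φ.toFun (a * u) := by
  have ha0 : a ≠ 0 := (one_pos.trans_le ha).ne'
  calc (a : ℝ≥0∞) * Φ.toFun u = a * Φ.toFun (a⁻¹ * (a * u)) := by rw [inv_mul_cancel_left₀ ha0]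
    _ ≤ a * ((a⁻¹ : ℝ≥0) * Φ.toFun (a * u)) := by
      gcongr; exact Φ.toFun_mul_le_of_le_one (inv_le_one_of_one_le₀ ha) _
    _ = Φ.toFun (a * u) := by
      rw [ENNReal.coe_inv ha0, ← mul_assoc, ENNReal.mul_inv_cancel (by simpa) (by simp), one_mul]

lemma ext_zero : Φ.ext 0 = 0 := by simp [ext, Φ.map_zero']

lemma ext_top : Φ.ext ⊤ = ⊤ := by simp [ext]

lemma ext_coe (u : ℝ≥0) : Φ.ext u = Φ.toFun u := by simp [ext]

lemma toFun_toNNReal_le_ext (u : ℝ≥0∞) : Φ.toFun u.toNNReal ≤ Φ.ext u := by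
  unfold ext; split_ifs <;> simp

lemma ext_mono : Monotone Φ.ext := by
  intro u w huw
  rcases eq_or_ne w ⊤ with rfl | hw
  · simp [ext_top]
  rw [ext, if_neg (ne_top_of_le_ne_top hw huw), ext, if_neg hw]
  exact Φ.toFun_mono (ENNReal.toNNReal_mono hw huw)

lemma measurable_ext : Measurable Φ.ext := Φ.ext_mono.measurable

lemma ext_mul_add_mul_le {a b : ℝ≥0∞} (hab : a + b = 1) (u w : ℝ≥0∞) :
    Φ.ext (a * u + b * w) ≤ a * Φ.ext u + b * Φ.ext w := by
  rcases eq_or_ne (a * Φ.ext u + b * Φ.ext w) ⊤ with htop | htop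
  · exact htop ▸ le_top
  have ha : a ≠ ⊤ := ne_top_of_le_ne_top ENNReal.one_ne_top (hab ▸ le_self_add)
  have hb : b ≠ ⊤ := ne_top_of_le_ne_top ENNReal.one_ne_top (hab ▸ le_add_self)
  lift a to ℝ≥0 using ha
  lift b to ℝ≥0 using hb
  have hab' : a + b = 1 := by exact_mod_cast hab
  have hcoe : ∀ (c : ℝ≥0) (x : ℝ≥0∞), (c : ℝ≥0∞) * Φ.ext x ≠ ⊤ →
      (c : ℝ≥0∞) * x = ((c * x.toNNReal : ℝ≥0) : ℝ≥0∞) := by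
    intro c x hcx
    rcases eq_or_ne c 0 with rfl | hc
    · simp
    have hx : x ≠ ⊤ := by rintro rfl; simp [ext_top, hc] at hcx
    simp [ENNReal.coe_toNNReal hx]
  rw [hcoe a u (ENNReal.add_ne_top.1 htop).1, hcoe b w (ENNReal.add_ne_top.1 htop).2,
    ← ENNReal.coe_add, ext_coe]
  calc Φ.toFun (a * u.toNNReal + b * w.toNNReal)
      ≤ a * Φ.toFun u.toNNReal + b * Φ.toFun w.toNNReal := Φ.convex' _ _ a b hab'
    _ ≤ a * Φ.ext u + b * Φ.ext w := by gcongr <;> exact Φ.toFun_toNNReal_le_ext _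

lemma ext_le_of_lt_inv {u s : ℝ≥0∞} (h : u < Φ.inv s) : Φ.ext u ≤ s := by
  have hu : u ≠ ⊤ := h.ne_top
  rw [ext, if_neg hu]
  by_contra! hs
  exact h.not_ge (sInf_le ⟨u.toNNReal, hs, ENNReal.coe_toNNReal hu⟩)

lemma inv_mono : Monotone Φ.inv :=
  fun _ _ hst => sInf_le_sInf (image_mono fun _ hr => hst.trans_lt hr)

lemma inv_lt_top {s : ℝ≥0∞} (hs : s ≠ ⊤) : Φ.inv s < ⊤ := by
  obtain ⟨r, hr⟩ := (Φ.tendsto_top'.eventually (lt_mem_nhds hs.lt_top)).exists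
  exact (show Φ.inv s ≤ r from sInf_le ⟨r, hr, rfl⟩).trans_lt ENNReal.coe_lt_top

lemma inv_mul_le {a : ℝ≥0} (ha : 1 ≤ a) (s : ℝ≥0∞) : Φ.inv (a * s) ≤ a * Φ.inv s := by
  have ha0 : (a : ℝ≥0∞) ≠ 0 := by exact_mod_cast (one_pos.trans_le ha).ne'
  rw [inv, inv, sInf_image', sInf_image', ENNReal.mul_iInf_of_ne ha0 ENNReal.coe_ne_top]
  refine le_iInf fun ⟨r, hr⟩ => iInf_le_of_le ⟨a * r, ?_⟩ (by simp)
  calc (a : ℝ≥0∞) * s < a * Φ.toFun r := (ENNReal.mul_lt_mul_iff_right ha0 ENNReal.coe_ne_top).2 hr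
    _ ≤ Φ.toFun (a * r) := Φ.mul_toFun_le_of_one_le ha r

lemma inv_inv_div_le {v : ℝ≥0∞} (hv : v ≠ ⊤) (s : ℝ≥0∞) :
    (Φ.inv (s / v))⁻¹ ≤ max 1 v * (Φ.inv s)⁻¹ := by
  have hM0 : max 1 v ≠ 0 := (zero_lt_one.trans_le (le_max_left 1 v)).ne'
  have hMt : max 1 v ≠ ⊤ := max_ne_top ENNReal.one_ne_top hv
  have hle : Φ.inv s ≤ max 1 v * Φ.inv (s / v) := by
    rcases le_total v 1 with hv1 | hv1
    · calc Φ.inv s ≤ Φ.inv (s / v) := Φ.inv_mono (by simpa using ENNReal.div_le_div_left hv1 s)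
        _ ≤ max 1 v * Φ.inv (s / v) := le_mul_of_one_le_left zero_le (le_max_left 1 v)
    · lift v to ℝ≥0 using hv
      have hv0 : (v : ℝ≥0∞) ≠ 0 := (zero_lt_one.trans_le hv1).ne'
      calc Φ.inv s = Φ.inv (v * (s / v)) := by rw [ENNReal.mul_div_cancel hv0 ENNReal.coe_ne_top]
        _ ≤ v * Φ.inv (s / v) := Φ.inv_mul_le (by exact_mod_cast hv1) _
        _ ≤ max 1 v * Φ.inv (s / v) := by gcongr; exact le_max_right 1 _
  calc (Φ.inv (s / v))⁻¹ = max 1 v * (max 1 v * Φ.inv (s / v))⁻¹ := by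
        rw [ENNReal.mul_inv (Or.inl hM0) (Or.inl hMt), ← mul_assoc,
          ENNReal.mul_inv_cancel hM0 hMt, one_mul]
    _ ≤ max 1 v * (Φ.inv s)⁻¹ := by gcongr

end YoungFunction

section Luxemburg

variable (Φ : YoungFunction) (μ : Measure X)

lemma setLIntegral_nnnorm_indicator {F : Type*} [NormedAddCommGroup F] {s : Set X}
    (hs : MeasurableSet s) (f : X → F) (B : Set X) :
    ∫⁻ z in B, (‖s.indicator f z‖₊ : ℝ≥0∞) ∂μ = ∫⁻ z in B ∩ s, (‖f z‖₊ : ℝ≥0∞) ∂μ := by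
  simp only [nnnorm_indicator_eq_indicator_nnnorm, ENNReal.coe_indicator,
    setLIntegral_indicator hs, inter_comm]

lemma luxNormE_mono_fun {E : Set X} (hE : MeasurableSet E) {g h : X → ℝ≥0∞}
    (hgh : ∀ x ∈ E, g x ≤ h x) : luxNormE Φ μ E g ≤ luxNormE Φ μ E h := by
  refine sInf_le_sInf fun l ⟨hl, hint⟩ => ⟨hl, le_trans ?_ hint⟩
  refine lintegral_mono_ae ?_
  filter_upwards [ae_restrict_of_forall_mem hE hgh] with x hx
  exact Φ.ext_mono (ENNReal.div_le_div_right hx l)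

lemma luxNormE_mono_set {E F : Set X} (hEF : E ⊆ F) (g : X → ℝ≥0∞) :
    luxNormE Φ μ E g ≤ luxNormE Φ μ F g :=
  sInf_le_sInf fun _ ⟨hl, hint⟩ => ⟨hl, (lintegral_mono_set hEF).trans hint⟩

lemma luxNormE_add_le (E : Set X) (g : X → ℝ≥0∞) {h : X → ℝ≥0∞}
    (hh : AEMeasurable h (μ.restrict E)) :
    luxNormE Φ μ E (g + h) ≤ luxNormE Φ μ E g + luxNormE Φ μ E h := by
  simp only [luxNormE, sInf_eq_iInf']
  refine ENNReal.le_iInf_add_iInf fun ⟨l₁, hl₁, hg⟩ ⟨l₂, hl₂, hh'⟩ => ?_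
  rcases eq_or_ne l₁ ⊤ with rfl | hl₁t
  · simp
  rcases eq_or_ne l₂ ⊤ with rfl | hl₂t
  · simp
  set l := l₁ + l₂
  have hl0 : l ≠ 0 := (hl₁.trans_le le_self_add).ne'
  have hlt : l ≠ ⊤ := ENNReal.add_ne_top.2 ⟨hl₁t, hl₂t⟩
  -- `(g + h) / (l₁ + l₂)` is a convex combination of `g / l₁` and `h / l₂`
  have hweight : ∀ (m : ℝ≥0∞) (a : ℝ≥0∞), m ≠ 0 → m ≠ ⊤ → m / l * (a / m) = a / l := by
    intro m a hm hmt
    rw [div_eq_mul_inv, div_eq_mul_inv, div_eq_mul_inv, mul_comm a, ← mul_assoc, mul_assoc m,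
      mul_comm l⁻¹, ← mul_assoc, ENNReal.mul_inv_cancel hm hmt, one_mul, mul_comm]
  have hsum : l₁ / l + l₂ / l = 1 := by rw [ENNReal.div_add_div_same, ENNReal.div_self hl0 hlt]
  have hadm : ∫⁻ x in E, Φ.ext ((g + h) x / l) ∂μ ≤ 1 := by
    calc ∫⁻ x in E, Φ.ext ((g + h) x / l) ∂μ
        ≤ ∫⁻ x in E, (l₁ / l * Φ.ext (g x / l₁) + l₂ / l * Φ.ext (h x / l₂)) ∂μ := by
          refine lintegral_mono fun x => ?_
          rw [Pi.add_apply, ENNReal.add_div, ← hweight l₁ (g x) hl₁.ne' hl₁t,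
            ← hweight l₂ (h x) hl₂.ne' hl₂t]
          exact Φ.ext_mul_add_mul_le hsum _ _
      _ = l₁ / l * ∫⁻ x in E, Φ.ext (g x / l₁) ∂μ + l₂ / l * ∫⁻ x in E, Φ.ext (h x / l₂) ∂μ := by
          have hmeas : AEMeasurable (fun x => l₂ / l * Φ.ext (h x / l₂)) (μ.restrict E) :=
            (Φ.measurable_ext.comp_aemeasurable (hh.div_const l₂)).const_mul _
          rw [lintegral_add_right' _ hmeas,
            lintegral_const_mul' _ _ (ENNReal.div_ne_top hl₁t hl0),
            lintegral_const_mul' _ _ (ENNReal.div_ne_top hl₂t hl0)]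
      _ ≤ l₁ / l * 1 + l₂ / l * 1 := by gcongr
      _ = 1 := by rw [mul_one, mul_one, hsum]
  exact iInf_le_of_le ⟨l, pos_iff_ne_zero.2 hl0, hadm⟩ le_rfl

lemma luxNormE_const_le {E : Set X} (hE : μ E ≠ 0) (c : ℝ≥0∞) :
    luxNormE Φ μ E (fun _ => c) ≤ 2 * c * (Φ.inv (μ E)⁻¹)⁻¹ := by
  set I := Φ.inv (μ E)⁻¹
  have hIt : I ≠ ⊤ := (Φ.inv_lt_top (ENNReal.inv_ne_top.2 hE)).ne
  rcases eq_or_ne c 0 with rfl | hc0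
  · refine le_of_forall_gt_imp_ge_of_dense fun ε hε => sInf_le ⟨by simpa using hε, ?_⟩
    simp [Φ.ext_zero]
  rcases eq_or_ne I 0 with hI0 | hI0
  · simp [hI0, hc0, ENNReal.mul_top]
  rcases eq_or_ne c ⊤ with rfl | hct
  · simp [hIt, ENNReal.top_mul]
  have hlam : c / (2 * c * I⁻¹) = 2⁻¹ * I := by
    rw [div_eq_mul_inv, ENNReal.mul_inv (Or.inr (ENNReal.inv_ne_top.2 hI0))
      (Or.inr (ENNReal.inv_ne_zero.2 hIt)),
      ENNReal.mul_inv (Or.inl two_ne_zero) (Or.inl ENNReal.ofNat_ne_top),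
      inv_inv, mul_comm 2⁻¹ c⁻¹, ← mul_assoc, ← mul_assoc, ENNReal.mul_inv_cancel hc0 hct, one_mul]
  have hhalf : 2⁻¹ * I < I := by
    rw [← ENNReal.div_eq_inv_mul]; exact ENNReal.half_lt_self hI0 hIt
  refine sInf_le ⟨by simp [pos_iff_ne_zero, hc0, hIt], ?_⟩
  rw [setLIntegral_const, hlam]
  calc Φ.ext (2⁻¹ * I) * μ E ≤ (μ E)⁻¹ * μ E := by gcongr; exact Φ.ext_le_of_lt_inv hhalf
    _ ≤ 1 := ENNReal.inv_mul_le_one _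

lemma luxNorm_indicator_univ {s : Set X} (hs : MeasurableSet s) (f : X → ℝ) :
    luxNorm Φ μ univ (s.indicator f) = luxNorm Φ μ s f := by
  have hint : ∀ l : ℝ≥0∞, ∫⁻ x, Φ.ext (‖s.indicator f x‖₊ / l) ∂μ =
      ∫⁻ x in s, Φ.ext (‖f x‖₊ / l) ∂μ := by
    intro l
    rw [← lintegral_indicator hs]
    refine lintegral_congr fun x => ?_
    by_cases hx : x ∈ s <;> simp [hx, Φ.ext_zero]
  simp only [luxNorm, luxNormE, Measure.restrict_univ, hint]

end Luxemburg

section FractionalMaximal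

variable {n : ℕ}

lemma volume_ball_eq (x : En n) {t : ℝ} (ht : 0 < t) :
    volume (ball x t) = ENNReal.ofReal (t ^ n) * volume (ball (0 : En n) 1) := by
  rw [Measure.addHaar_ball_of_pos volume x ht, finrank_euclideanSpace_fin]

lemma volume_ball_rpow (hn : n ≠ 0) (α : ℝ) (x : En n) {t : ℝ} (ht : 0 < t) :
    volume (ball x t) ^ (α / n - 1) =
      ENNReal.ofReal t ^ (α - n) * volume (ball (0 : En n) 1) ^ (α / n - 1) := by
  rw [volume_ball_eq x ht, ENNReal.mul_rpow_of_ne_top ENNReal.ofReal_ne_top measure_ball_lt_top.ne,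
    ← Real.rpow_natCast, ← ENNReal.ofReal_rpow_of_pos ht, ← ENNReal.rpow_mul]
  congr 2
  field_simp

lemma inv_volume_ball (x : En n) {t : ℝ} (ht : 0 < t) :
    (volume (ball x t))⁻¹ = ENNReal.ofReal t ^ (-(n : ℝ)) / volume (ball (0 : En n) 1) := by
  rw [volume_ball_eq x ht,
    ENNReal.mul_inv (Or.inr measure_ball_lt_top.ne) (Or.inl ENNReal.ofReal_ne_top),
    ← Real.rpow_natCast, ← ENNReal.ofReal_rpow_of_pos ht, ← ENNReal.rpow_neg, div_eq_mul_inv]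

lemma le_fracMaximal (α : ℝ) (f : En n → ℝ) (y : En n) {t : ℝ} (ht : 0 < t) :
    volume (ball y t) ^ (α / n - 1) * ∫⁻ z in ball y t, (‖f z‖₊ : ℝ≥0∞) ≤ fracMaximal n α f y :=
  le_iSup₂ (f := fun t (_ : 0 < t) =>
    volume (ball y t) ^ (α / n - 1) * ∫⁻ z in ball y t, (‖f z‖₊ : ℝ≥0∞)) t ht

lemma fracMaximal_le_indicator_add_indicator_compl (α : ℝ) (f : En n → ℝ) {s : Set (En n)}
    (hs : MeasurableSet s) (y : En n) :
    fracMaximal n α f y ≤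
      fracMaximal n α (s.indicator f) y + fracMaximal n α (sᶜ.indicator f) y := by
  refine iSup₂_le fun t ht => ?_
  rw [← lintegral_inter_add_sdiff _ _ hs, ← setLIntegral_nnnorm_indicator volume hs,
    sdiff_eq, ← setLIntegral_nnnorm_indicator volume hs.compl, mul_add]
  exact add_le_add (le_fracMaximal α _ y ht) (le_fracMaximal α _ y ht)

lemma fracMaximal_indicator_compl_ball_le (hn : n ≠ 0) (α : ℝ) (f : En n → ℝ) {x y : En n}
    {r : ℝ} (hy : y ∈ ball x r) :
    fracMaximal n α ((ball x (2 * r))ᶜ.indicator f) y ≤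
      volume (ball (0 : En n) 1) ^ (α / n - 1) * 2 ^ ((n : ℝ) - α) *
        ⨆ (t : ℝ) (_ : 2 * r < t),
          ENNReal.ofReal t ^ (α - n) * ∫⁻ z in ball x t, (‖f z‖₊ : ℝ≥0∞) := by
  rw [mem_ball] at hy
  refine iSup₂_le fun t ht => ?_
  rw [setLIntegral_nnnorm_indicator volume measurableSet_ball.compl]
  rcases le_or_gt t r with htr | htr
  · have hempty : ball y t ∩ (ball x (2 * r))ᶜ = ∅ := by
      rw [← sdiff_eq, sdiff_eq_empty]
      exact ball_subset_ball' (by linarith)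
    simp [hempty]
  have hscale :
      ENNReal.ofReal t ^ (α - n) = 2 ^ ((n : ℝ) - α) * ENNReal.ofReal (2 * t) ^ (α - n) := by
    rw [ENNReal.ofReal_mul zero_le_two, ENNReal.ofReal_ofNat,
      ENNReal.mul_rpow_of_ne_top ENNReal.ofNat_ne_top ENNReal.ofReal_ne_top, ← mul_assoc,
      ← ENNReal.rpow_add _ _ two_ne_zero ENNReal.ofNat_ne_top]
    simp
  calc volume (ball y t) ^ (α / n - 1) * ∫⁻ z in ball y t ∩ (ball x (2 * r))ᶜ, (‖f z‖₊ : ℝ≥0∞)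
      ≤ ENNReal.ofReal t ^ (α - n) * volume (ball (0 : En n) 1) ^ (α / n - 1) *
          ∫⁻ z in ball x (2 * t), (‖f z‖₊ : ℝ≥0∞) := by
        rw [volume_ball_rpow hn α y ht]
        gcongr
        exact inter_subset_left.trans (ball_subset_ball' (by linarith))
    _ = volume (ball (0 : En n) 1) ^ (α / n - 1) * 2 ^ ((n : ℝ) - α) *
          (ENNReal.ofReal (2 * t) ^ (α - n) * ∫⁻ z in ball x (2 * t), (‖f z‖₊ : ℝ≥0∞)) := by
        rw [hscale]; ring
    _ ≤ _ := by
        gcongr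
        exact le_iSup₂_of_le (f := fun t (_ : 2 * r < t) =>
          ENNReal.ofReal t ^ (α - n) * ∫⁻ z in ball x t, (‖f z‖₊ : ℝ≥0∞))
          (2 * t) (by linarith) le_rfl

end FractionalMaximal

lemma luxNormE_fracMaximal_ball_le {n : ℕ} (hn : n ≠ 0) {α : ℝ} {Φ Ψ : YoungFunction} {A : ℝ}
    (hbdd : ∀ g : En n → ℝ, luxNormE Ψ volume univ (fracMaximal n α g) ≤
      ENNReal.ofReal A * luxNorm Φ volume univ g)
    (x : En n) {r : ℝ} (hr : 0 < r) (f : En n → ℝ) :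
    luxNormE Ψ volume (ball x r) (fracMaximal n α f) ≤
      ENNReal.ofReal A * luxNorm Φ volume (ball x (2 * r)) f +
        2 * (volume (ball (0 : En n) 1) ^ (α / n - 1) * 2 ^ ((n : ℝ) - α)) *
          max 1 (volume (ball (0 : En n) 1)) *
          ((Ψ.inv (ENNReal.ofReal r ^ (-(n : ℝ))))⁻¹ *
            ⨆ (t : ℝ) (_ : 2 * r < t),
              ENNReal.ofReal t ^ (α - n) * ∫⁻ z in ball x t, (‖f z‖₊ : ℝ≥0∞)) := by
  set v := volume (ball (0 : En n) 1)
  set c := v ^ (α / n - 1) * 2 ^ ((n : ℝ) - α)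
  set K := ⨆ (t : ℝ) (_ : 2 * r < t), ENNReal.ofReal t ^ (α - n) * ∫⁻ z in ball x t, (‖f z‖₊ : ℝ≥0∞)
  set I := Ψ.inv (ENNReal.ofReal r ^ (-(n : ℝ)))
  have hnear : luxNormE Ψ volume (ball x r) (fracMaximal n α ((ball x (2 * r)).indicator f)) ≤
      ENNReal.ofReal A * luxNorm Φ volume (ball x (2 * r)) f := by
    rw [← luxNorm_indicator_univ Φ volume measurableSet_ball]
    exact (luxNormE_mono_set Ψ volume (subset_univ _) _).trans (hbdd _)
  have hfar : luxNormE Ψ volume (ball x r) (fun _ => c * K) ≤ 2 * (c * K) * (max 1 v * I⁻¹) := by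
    refine (luxNormE_const_le Ψ volume (measure_ball_pos volume x hr).ne' _).trans ?_
    rw [inv_volume_ball x hr]
    gcongr
    exact Ψ.inv_inv_div_le measure_ball_lt_top.ne _
  calc luxNormE Ψ volume (ball x r) (fracMaximal n α f)
      ≤ luxNormE Ψ volume (ball x r)
          (fracMaximal n α ((ball x (2 * r)).indicator f) + fun _ => c * K) :=
        luxNormE_mono_fun Ψ volume measurableSet_ball fun y hy =>
          (fracMaximal_le_indicator_add_indicator_compl α f measurableSet_ball y).trans
            (add_le_add le_rfl (fracMaximal_indicator_compl_ball_le hn α f hy))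
    _ ≤ ENNReal.ofReal A * luxNorm Φ volume (ball x (2 * r)) f + 2 * (c * K) * (max 1 v * I⁻¹) :=
        (luxNormE_add_le Ψ volume _ _ aemeasurable_const).trans (add_le_add hnear hfar)
    _ = ENNReal.ofReal A * luxNorm Φ volume (ball x (2 * r)) f + 2 * c * max 1 v * (I⁻¹ * K) := by
        ring

theorem fracMaximal_local_strong_estimate_general
    (n : ℕ) (α : ℝ) (hα0 : 0 ≤ α) (hαn : α < n) (Φ Ψ : YoungFunction)
    (A : ℝ)
    (hbdd : ∀ g : En n → ℝ,
      luxNormE Ψ volume Set.univ (fracMaximal n α g) ≤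
        ENNReal.ofReal A * luxNorm Φ volume Set.univ g) :
    ∃ C : ℝ, 0 < C ∧ ∀ (x : En n) (r : ℝ), 0 < r → ∀ f : En n → ℝ,
      LocallyIntegrable f volume →
      luxNormE Ψ volume (ball x r) (fracMaximal n α f) ≤
        ENNReal.ofReal C *
          (luxNorm Φ volume (ball x (2 * r)) f +
            (Ψ.inv (ENNReal.ofReal r ^ (-(n : ℝ))))⁻¹ *
              ⨆ (t : ℝ) (_ : 2 * r < t),
                ENNReal.ofReal t ^ (α - (n : ℝ)) *
                  ∫⁻ z in ball x t, (‖f z‖₊ : ℝ≥0∞)) := by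
  have hn : n ≠ 0 := by exact_mod_cast (hα0.trans_lt hαn).ne'
  set v := volume (ball (0 : En n) 1)
  have hv : v ≠ ⊤ := measure_ball_lt_top.ne
  set D := ENNReal.ofReal A + 2 * (v ^ (α / n - 1) * 2 ^ ((n : ℝ) - α)) * max 1 v
  have hD : D ≠ ⊤ := by
    have hv0 : v ≠ 0 := (measure_ball_pos volume 0 one_pos).ne'
    have h2 : (2 : ℝ≥0∞) ^ ((n : ℝ) - α) ≠ ⊤ :=
      ENNReal.rpow_ne_top_of_nonneg (sub_nonneg.2 hαn.le) ENNReal.ofNat_ne_top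
    have hvα : v ^ (α / n - 1) ≠ ⊤ := ENNReal.rpow_ne_top_of_ne_zero hv0 hv
    finiteness
  refine ⟨D.toReal + 1, by positivity, fun x r hr f _ => ?_⟩
  refine (luxNormE_fracMaximal_ball_le hn hbdd x hr f).trans ?_
  calc _ ≤ D * luxNorm Φ volume (ball x (2 * r)) f + D * _ := by
        gcongr
        exacts [le_self_add, le_add_self]
    _ = D * _ := (mul_add _ _ _).symm
    _ ≤ _ := by
        gcongr
        exact (ENNReal.le_ofReal_iff_toReal_le hD (by positivity)).2 (by linarith)

/-- If `M_α` is bounded from `L_Φ(ℝⁿ)` to `L_Ψ(ℝⁿ)`, then the local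
estimate `‖M_α f‖_{L_Ψ(B(x,r))} ≲ ‖f‖_{L_Φ(B(x,2r))} + Ψ⁻¹(r⁻ⁿ)⁻¹ sup_{t>2r} t^{α-n} ∫_{B(x,t)}|f|`
holds. -/
theorem fracMaximal_local_strong_estimate
    (n : ℕ) (α : ℝ) (hα0 : 0 ≤ α) (hαn : α < n) (Φ Ψ : YoungFunction)
    (A : ℝ) (hA : 0 < A)
    (hbdd : ∀ g : En n → ℝ,
      luxNormE Ψ volume Set.univ (fracMaximal n α g) ≤
        ENNReal.ofReal A * luxNorm Φ volume Set.univ g) :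
    ∃ C : ℝ, 0 < C ∧ ∀ (x : En n) (r : ℝ), 0 < r → ∀ f : En n → ℝ,
      LocallyIntegrable f volume →
      luxNormE Ψ volume (ball x r) (fracMaximal n α f) ≤
        ENNReal.ofReal C *
          (luxNorm Φ volume (ball x (2 * r)) f +
            (Ψ.inv (ENNReal.ofReal r ^ (-(n : ℝ))))⁻¹ *
              ⨆ (t : ℝ) (_ : 2 * r < t),
                ENNReal.ofReal t ^ (α - (n : ℝ)) *
                  ∫⁻ z in ball x t, (‖f z‖₊ : ℝ≥0∞)) :=
  fracMaximal_local_strong_estimate_general n α hα0 hαn Φ Ψ A hbdd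

end
end
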